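/- arXiv:math/9807005 — 4 statements merged into one kernel-verified Lean document; each statement's English description precedes it below -/
import Mathlib

section
/- The algebra map Δ: Ẽ_κ(2) → Ẽ_κ(2) ⊗ Ẽ_κ(2) defined on generators by Δa₀ = a₀⊗a₀, Δa₀* = a₀*⊗a₀*, Δw₀ = w₀⊗a₀* + a₀⊗w₀, Δw₀* = w₀*⊗a₀ + a₀*⊗w₀* respects the defining relation [a₀, w₀] = (1/2κ)(a₀² − 1); that is, [Δa₀, Δw₀] = (1/2κ)((Δa₀)² − 1⊗1) holds in the tensor product algebra. -/
open scoped TensorProduct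

/-- The coproduct of Ẽ_κ(2) respects the defining relation
[a₀, w₀] = (1/2κ)(a₀² − 1): one has [Δa₀, Δw₀] = (1/2κ)((Δa₀)² − 1⊗1)
in the tensor product algebra. -/
theorem stmt4 (κ : ℝ) (hκ : κ ≠ 0)
    (E : Type*) [Ring E] [Algebra ℂ E]
    (a as w ws : E)
    (r1 : as * w - w * as = (2 * (κ : ℂ))⁻¹ • (as ^ 2 - 1))
    (r2 : as * ws - ws * as = -((2 * (κ : ℂ))⁻¹ • (as ^ 2 - 1)))
    (r3 : a * w - w * a = (2 * (κ : ℂ))⁻¹ • (a ^ 2 - 1))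
    (r4 : a * ws - ws * a = -((2 * (κ : ℂ))⁻¹ • (a ^ 2 - 1)))
    (r5 : w * ws - ws * w = -((2 * (κ : ℂ))⁻¹ • ((a + as) * (w + ws))))
    (r6 : a * as = 1) (r7 : as * a = 1)
    (r8 : a * as - as * a = 0) :
    (a ⊗ₜ[ℂ] a) * (w ⊗ₜ[ℂ] as + a ⊗ₜ[ℂ] w) -
        (w ⊗ₜ[ℂ] as + a ⊗ₜ[ℂ] w) * (a ⊗ₜ[ℂ] a) =
      (2 * (κ : ℂ))⁻¹ • ((a ⊗ₜ[ℂ] a) * (a ⊗ₜ[ℂ] a) - (1 : E ⊗[ℂ] E)) := by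
  have haw : a * w = (2 * (κ : ℂ))⁻¹ • (a ^ 2 - 1) + w * a := sub_eq_iff_eq_add.mp r3
  simp only [mul_add, add_mul, Algebra.TensorProduct.tmul_mul_tmul, r6, r7, haw,
    Algebra.TensorProduct.one_def, smul_sub, TensorProduct.sub_tmul, TensorProduct.tmul_sub,
    TensorProduct.add_tmul, TensorProduct.tmul_add,
    TensorProduct.smul_tmul', TensorProduct.tmul_smul, smul_smul, sq, mul_one, one_mul]
  module
end

section
/- In Ẽ_κ(2), the antipode S defined on generators by S(a₀) = a₀*, S(a₀*) = a₀, S(w₀) = −a₀*w₀a₀, S(w₀*) = −a₀w₀*a₀* satisfies the antipode identity m∘(S⊗id)∘Δ = η∘ε on each generator, where ε(a₀) = ε(a₀*) = 1 and ε(w₀) = ε(w₀*) = 0. -/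
/-- In Ẽ_κ(2), the antipode S with S(a₀) = a₀*, S(a₀*) = a₀,
S(w₀) = −a₀*w₀a₀, S(w₀*) = −a₀w₀*a₀* satisfies m∘(S⊗id)∘Δ = η∘ε on each generator,
where Δa₀ = a₀⊗a₀, Δa₀* = a₀*⊗a₀*, Δw₀ = w₀⊗a₀* + a₀⊗w₀, Δw₀* = w₀*⊗a₀ + a₀*⊗w₀*,
ε(a₀) = ε(a₀*) = 1, ε(w₀) = ε(w₀*) = 0.  Evaluating m∘(S⊗id)∘Δ on the generators
gives the four stated equations. -/
theorem stmt5 (κ : ℝ) (hκ : κ ≠ 0)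
    (E : Type*) [Ring E] [Algebra ℂ E]
    (a as w ws : E)
    (r1 : as * w - w * as = (2 * (κ : ℂ))⁻¹ • (as ^ 2 - 1))
    (r2 : as * ws - ws * as = -((2 * (κ : ℂ))⁻¹ • (as ^ 2 - 1)))
    (r3 : a * w - w * a = (2 * (κ : ℂ))⁻¹ • (a ^ 2 - 1))
    (r4 : a * ws - ws * a = -((2 * (κ : ℂ))⁻¹ • (a ^ 2 - 1)))
    (r5 : w * ws - ws * w = -((2 * (κ : ℂ))⁻¹ • ((a + as) * (w + ws))))
    (r6 : a * as = 1) (r7 : as * a = 1) :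
    -- m∘(S⊗id)∘Δ (a₀) = ε(a₀)·1 :
    (as * a = 1) ∧
    -- m∘(S⊗id)∘Δ (a₀*) = ε(a₀*)·1 :
    (a * as = 1) ∧
    -- m∘(S⊗id)∘Δ (w₀) = S(w₀)·a₀* + S(a₀)·w₀ = ε(w₀)·1 = 0 :
    ((-(as * w * a)) * as + as * w = 0) ∧
    -- m∘(S⊗id)∘Δ (w₀*) = S(w₀*)·a₀ + S(a₀*)·w₀* = ε(w₀*)·1 = 0 :
    ((-(a * ws * as)) * a + a * ws = 0) := by
  refine ⟨r7, r6, ?_, ?_⟩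
  · rw [neg_mul, mul_assoc (as * w) a as, r6, mul_one, neg_add_cancel]
  · rw [neg_mul, mul_assoc (a * ws) as a, r7, mul_one, neg_add_cancel]
end

section
/- The coproduct of E_κ(2), defined on generators by ΔA = A⊗A, ΔA* = A*⊗A*, Δv₊ = A⊗v₊ + v₊⊗1, Δv₋ = A*⊗v₋ + v₋⊗1, respects the relation [v₊, v₋] = (i/κ)(v₋ − v₊): one has [Δv₊, Δv₋] = (i/κ)(Δv₋ − Δv₊) in E_κ(2) ⊗ E_κ(2). -/
open scoped TensorProduct

/-- The coproduct of E_κ(2) respects the relation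
[v₊, v₋] = (i/κ)(v₋ − v₊): with Δv₊ = A⊗v₊ + v₊⊗1 and Δv₋ = A*⊗v₋ + v₋⊗1,
one has [Δv₊, Δv₋] = (i/κ)(Δv₋ − Δv₊) in E_κ(2) ⊗ E_κ(2). -/
theorem stmt8 (κ : ℝ) (hκ : κ ≠ 0)
    (E : Type*) [Ring E] [Algebra ℂ E]
    (A As vp vm : E)
    (r1 : A * vm - vm * A = (Complex.I / (κ : ℂ)) • ((1 : E) - A))
    (r2 : As * vm - vm * As = (Complex.I / (κ : ℂ)) • (As - As ^ 2))
    (r3 : A * vp - vp * A = (Complex.I / (κ : ℂ)) • (A - A ^ 2))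
    (r4 : As * vp - vp * As = (Complex.I / (κ : ℂ)) • ((1 : E) - As))
    (r5 : vp * vm - vm * vp = (Complex.I / (κ : ℂ)) • (vm - vp))
    (r6 : A * As - As * A = 0)
    (r7 : A * As = 1) (r8 : As * A = 1) :
    (A ⊗ₜ[ℂ] vp + vp ⊗ₜ[ℂ] 1) * (As ⊗ₜ[ℂ] vm + vm ⊗ₜ[ℂ] 1) -
        (As ⊗ₜ[ℂ] vm + vm ⊗ₜ[ℂ] 1) * (A ⊗ₜ[ℂ] vp + vp ⊗ₜ[ℂ] 1) =
      (Complex.I / (κ : ℂ)) •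
        ((As ⊗ₜ[ℂ] vm + vm ⊗ₜ[ℂ] 1) - (A ⊗ₜ[ℂ] vp + vp ⊗ₜ[ℂ] 1)) := by
  set c : ℂ := Complex.I / (κ : ℂ) with hc
  have h1 : A * vm = c • ((1 : E) - A) + vm * A := by rw [← r1]; abel
  have h4 : As * vp = c • ((1 : E) - As) + vp * As := by rw [← r4]; abel
  have h5 : vp * vm = c • (vm - vp) + vm * vp := by rw [← r5]; abel
  simp only [add_mul, mul_add, Algebra.TensorProduct.tmul_mul_tmul, h1, h4, h5, r7, r8,
    mul_one, one_mul, TensorProduct.add_tmul, TensorProduct.tmul_add,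
    TensorProduct.smul_tmul', TensorProduct.tmul_smul, TensorProduct.sub_tmul,
    TensorProduct.tmul_sub, smul_sub, smul_add]
  abel
end

section
/- In E_κ(2), the left-invariant 1-form relations of the 3D calculus are consistent with involution: given the *-structure A* = A⁻¹, v₊* = v₋ (so v₋* = v₊), the commutation relations [v₋, φ₁] = (i/2κ)A*(3φ₁+φ₂) − (1/4κ²)A*φ₀ and [v₊, φ₂] = (i/2κ)A(φ₁+3φ₂) − (1/4κ²)Aφ₀ are exchanged under the involution φ₀* = −φ₀, φ₁* = φ₂, φ₂* = φ₁, using (ωx)* = x*ω* for a form ω and algebra element x. -/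
lemma stmt17_aux (κ : ℝ)
    (Ω : Type*) [Ring Ω] [Algebra ℂ Ω]
    (st : Ω → Ω)
    (hst_add : ∀ x y, st (x + y) = st x + st y)
    (hst_mul : ∀ x y, st (x * y) = st y * st x)
    (hst_smul : ∀ (c : ℂ) (x : Ω), st (c • x) = (starRingEnd ℂ c) • st x)
    (A As vp vm f0 f1 f2 : Ω)
    (c0 : A * f0 = f0 * A) (c1 : A * f1 = f1 * A) (c2 : A * f2 = f2 * A)
    (sAs : st As = A) (svm : st vm = vp)
    (sf0 : st f0 = -f0) (sf1 : st f1 = f2) (sf2 : st f2 = f1)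
    (h : vm * f1 - f1 * vm =
        (Complex.I / (2 * (κ : ℂ))) • (As * ((3 : ℂ) • f1 + f2))
          - (4 * (κ : ℂ) ^ 2)⁻¹ • (As * f0)) :
    vp * f2 - f2 * vp =
        (Complex.I / (2 * (κ : ℂ))) • (A * (f1 + (3 : ℂ) • f2))
          - (4 * (κ : ℂ) ^ 2)⁻¹ • (A * f0) := by
  have st_neg : ∀ x, st (-x) = -st x := by
    intro x
    have := hst_smul (-1) x
    simpa using this
  have st_sub : ∀ x y, st (x - y) = st x - st y := by
    intro x y
    rw [sub_eq_add_neg, hst_add, st_neg, sub_eq_add_neg]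
  have h' := congrArg st h
  rw [st_sub, hst_mul, hst_mul, st_sub, hst_smul, hst_smul, hst_mul, hst_mul,
    hst_add, hst_smul, sAs, svm, sf0, sf1, sf2] at h'
  have e : f2 * vp - vp * f2 =
      (starRingEnd ℂ (Complex.I / (2 * (κ : ℂ)))) • (((starRingEnd ℂ 3) • f2 + f1) * A)
        - (starRingEnd ℂ (4 * (κ : ℂ) ^ 2)⁻¹) • (-f0 * A) := h'
  have hc3 : (starRingEnd ℂ 3) = (3 : ℂ) := map_ofNat _ 3
  have hcI : (starRingEnd ℂ (Complex.I / (2 * (κ : ℂ)))) = -(Complex.I / (2 * (κ : ℂ))) := by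
    simp [map_div₀, Complex.conj_I, map_mul, Complex.conj_ofReal, neg_div, map_ofNat]
  have hck : (starRingEnd ℂ (4 * (κ : ℂ) ^ 2)⁻¹) = (4 * (κ : ℂ) ^ 2)⁻¹ := by
    simp [map_inv₀, map_mul, map_pow, Complex.conj_ofReal, map_ofNat]
  rw [hc3, hcI, hck] at e
  have key : ((3 : ℂ) • f2 + f1) * A = A * (f1 + (3 : ℂ) • f2) := by
    rw [add_mul, mul_add, smul_mul_assoc, mul_smul_comm, c1, c2, add_comm]
  rw [key, neg_mul, ← c0] at e
  rw [show vp * f2 - f2 * vp = -(f2 * vp - vp * f2) from (neg_sub _ _).symm, e]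
  module


/-- In the 3D calculus on E_κ(2), with the *-structure
A* = A⁻¹, v₊* = v₋, and the involution on 1-forms φ₀* = −φ₀, φ₁* = φ₂, φ₂* = φ₁
(with (ωx)* = x*ω*, (xω)* = ω*x*), the commutation relations
[v₋, φ₁] = (i/2κ)A*(3φ₁+φ₂) − (1/4κ²)A*φ₀ and
[v₊, φ₂] = (i/2κ)A(φ₁+3φ₂) − (1/4κ²)Aφ₀ are exchanged under the involution. -/
theorem stmt17 (κ : ℝ) (hκ : κ ≠ 0)
    (Ω : Type*) [Ring Ω] [Algebra ℂ Ω]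
    (st : Ω → Ω)
    (hst_add : ∀ x y, st (x + y) = st x + st y)
    (hst_mul : ∀ x y, st (x * y) = st y * st x)
    (hst_smul : ∀ (c : ℂ) (x : Ω), st (c • x) = (starRingEnd ℂ c) • st x)
    (hst_inv : ∀ x, st (st x) = x)
    (A As vp vm f0 f1 f2 : Ω)
    -- E_κ(2) relations:
    (r1 : A * vm - vm * A = (Complex.I / (κ : ℂ)) • ((1 : Ω) - A))
    (r2 : As * vm - vm * As = (Complex.I / (κ : ℂ)) • (As - As ^ 2))
    (r3 : A * vp - vp * A = (Complex.I / (κ : ℂ)) • (A - A ^ 2))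
    (r4 : As * vp - vp * As = (Complex.I / (κ : ℂ)) • ((1 : Ω) - As))
    (r5 : vp * vm - vm * vp = (Complex.I / (κ : ℂ)) • (vm - vp))
    (r6 : A * As = 1) (r7 : As * A = 1)
    -- relations (14): A, A* commute with all the 1-forms:
    (c0 : A * f0 = f0 * A) (c1 : A * f1 = f1 * A) (c2 : A * f2 = f2 * A)
    (c3 : As * f0 = f0 * As) (c4 : As * f1 = f1 * As) (c5 : As * f2 = f2 * As)
    -- the *-structure on generators and forms:
    (sA : st A = As) (sAs : st As = A)
    (svp : st vp = vm) (svm : st vm = vp)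
    (sf0 : st f0 = -f0) (sf1 : st f1 = f2) (sf2 : st f2 = f1) :
    (vm * f1 - f1 * vm =
        (Complex.I / (2 * (κ : ℂ))) • (As * ((3 : ℂ) • f1 + f2))
          - (4 * (κ : ℂ) ^ 2)⁻¹ • (As * f0)) ↔
      (vp * f2 - f2 * vp =
        (Complex.I / (2 * (κ : ℂ))) • (A * (f1 + (3 : ℂ) • f2))
          - (4 * (κ : ℂ) ^ 2)⁻¹ • (A * f0)) := by
  constructor
  · intro h
    exact stmt17_aux κ Ω st hst_add hst_mul hst_smul A As vp vm f0 f1 f2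
      c0 c1 c2 sAs svm sf0 sf1 sf2 h
  · intro h
    have h2 : vp * f2 - f2 * vp =
        (Complex.I / (2 * (κ : ℂ))) • (A * ((3 : ℂ) • f2 + f1))
          - (4 * (κ : ℂ) ^ 2)⁻¹ • (A * f0) := by
      rw [show (3 : ℂ) • f2 + f1 = f1 + (3 : ℂ) • f2 from add_comm _ _]; exact h
    have h3 := stmt17_aux κ Ω st hst_add hst_mul hst_smul As A vm vp f0 f2 f1
      c3 c5 c4 sA svp sf0 sf2 sf1 h2
    rw [show f2 + (3 : ℂ) • f1 = (3 : ℂ) • f1 + f2 from add_comm _ _] at h3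
    exact h3
end
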